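/- Fix an integer n > 1 and let Γ be a finite simplicial graph satisfying: (1) there is an induced subgraph B ⊂ Γ such that V(Γ) ∖ V(B) consists of exactly two vertices u and v; (2) B has hypergraph index n − 1; (3) Link(u) is a pair of non-adjacent vertices of B, and Link(v) is a pair of non-adjacent vertices of B; (4) for every vertex s ∈ Γ − Star(u), the pair (u,s) is a rank n pair, and for every s ∈ Γ − Star(v), the pair (v,s) is a rank n pair. Then Γ has hypergraph index exactly n. -/

import Mathlib

open Relation

variable {V : Type*}

/-- Relators of the right-angled Coxeter group of a simplicial graph. -/
def racgRels (G : SimpleGraph V) : Set (FreeGroup V) :=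
  {r | (∃ v, r = FreeGroup.of v * FreeGroup.of v) ∨
       (∃ v w, G.Adj v w ∧
          r = FreeGroup.of v * FreeGroup.of w * FreeGroup.of v * FreeGroup.of w)}

/-- The right-angled Coxeter group `W_Γ` of a simplicial graph `Γ`. -/
abbrev RACG (G : SimpleGraph V) := PresentedGroup (racgRels G)

/-- The generator of `W_Γ` corresponding to a vertex. -/
def racgGen (G : SimpleGraph V) (v : V) : RACG G := PresentedGroup.of v

/-- Word length with respect to the vertex generators. -/
noncomputable def wordLength (G : SimpleGraph V) (g : RACG G) : ℕ :=
  sInf {n | ∃ l : List V, l.length = n ∧ (l.map (racgGen G)).prod = g}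

/-- Word metric on `W_Γ`. -/
noncomputable def wdist (G : SimpleGraph V) (g h : RACG G) : ℕ :=
  wordLength G (g⁻¹ * h)

/-- The special subgroup `W_T` generated by a subset `T` of the vertices. -/
def specialSubgroup (G : SimpleGraph V) (T : Set V) : Subgroup (RACG G) :=
  Subgroup.closure (racgGen G '' T)

/-- The left coset `g W_T` as a subset of `W_Γ`. -/
def leftCosetOf (G : SimpleGraph V) (g : RACG G) (T : Set V) : Set (RACG G) :=
  (g * ·) '' (specialSubgroup G T : Set (RACG G))

/-- The `C`-neighborhood of a subset in the word metric. -/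
noncomputable def nbhd (G : SimpleGraph V) (C : ℕ) (A : Set (RACG G)) : Set (RACG G) :=
  {x | ∃ a ∈ A, wdist G x a ≤ C}

/-- A subset of `W_Γ` has infinite diameter. -/
def InfDiam (G : SimpleGraph V) (A : Set (RACG G)) : Prop :=
  ∀ D : ℕ, ∃ x ∈ A, ∃ y ∈ A, D ≤ wdist G x y

/-- Two subsets are `C`-Hausdorff close. -/
def HausCloseWith (G : SimpleGraph V) (C : ℕ) (A B : Set (RACG G)) : Prop :=
  A ⊆ nbhd G C B ∧ B ⊆ nbhd G C A

/-- Two subsets are Hausdorff close. -/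
def HausClose (G : SimpleGraph V) (A B : Set (RACG G)) : Prop :=
  ∃ C : ℕ, HausCloseWith G C A B

/-- A pair of distinct non-adjacent vertices. -/
def NonAdjPair (G : SimpleGraph V) (s t : V) : Prop := s ≠ t ∧ ¬ G.Adj s t

/-- A set of vertices containing a pair of non-adjacent vertices. -/
def HasNonAdjPair (G : SimpleGraph V) (A : Set V) : Prop :=
  ∃ s ∈ A, ∃ t ∈ A, NonAdjPair G s t

/-- `L` is the join `A ⋆ B` (on the level of vertex sets of induced subgraphs). -/
def JoinDecomp (G : SimpleGraph V) (L A B : Set V) : Prop :=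
  A ∪ B = L ∧ ∀ a ∈ A, ∀ b ∈ B, G.Adj a b

/-- `L` is a join of two induced subgraphs, each containing a pair of
non-adjacent vertices. -/
def IsWidePre (G : SimpleGraph V) (L : Set V) : Prop :=
  ∃ A B : Set V, JoinDecomp G L A B ∧ HasNonAdjPair G A ∧ HasNonAdjPair G B

/-- The wide subgraphs `Ω(Γ)`: maximal joins of two induced subgraphs each
containing a pair of non-adjacent vertices. -/
def IsWide (G : SimpleGraph V) (L : Set V) : Prop :=
  IsWidePre G L ∧ ∀ L', IsWidePre G L' → L ⊆ L' → L = L'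

/-- `L = A ⋆ K` with `A` a pair of non-adjacent vertices and `K` a nonempty clique. -/
def IsStripDecomp (G : SimpleGraph V) (L A K : Set V) : Prop :=
  (∃ s t, NonAdjPair G s t ∧ A = {s, t}) ∧ K.Nonempty ∧ G.IsClique K ∧
    A ∪ K = L ∧ ∀ a ∈ A, ∀ k ∈ K, G.Adj a k

def IsStripPre (G : SimpleGraph V) (L : Set V) : Prop :=
  ∃ A K : Set V, IsStripDecomp G L A K

/-- The strip subgraphs `Ψ(Γ)`: subgraphs of the form `A ⋆ K` as above that are
not properly contained in any wide subgraph nor in any other such subgraph. -/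
def IsStrip (G : SimpleGraph V) (L : Set V) : Prop :=
  IsStripPre G L ∧ (∀ L', IsWide G L' → L ⊆ L' → L = L') ∧
    (∀ L', IsStripPre G L' → L ⊆ L' → L = L')

/-- Two hyperedges of a hypergraph intersect in a pair of non-adjacent vertices. -/
def hypStep (G : SimpleGraph V) (E : Set (Set V)) (H H' : Set V) : Prop :=
  H ∈ E ∧ H' ∈ E ∧ ∃ s t, NonAdjPair G s t ∧ s ∈ H ∩ H' ∧ t ∈ H ∩ H'

/-- The hyperedge sets of the lambda hypergraphs `Λ_i(Γ)`. -/
def Lam (G : SimpleGraph V) : ℕ → Set (Set V)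
  | 0 => {L | IsWide G L ∨ IsStrip G L}
  | (i+1) =>
      {Z | ∃ H ∈ Lam G i,
        Z = ⋃₀ {H' | H' ∈ Lam G i ∧ ReflTransGen (hypStep G (Lam G i)) H H'}}

/-- A hyperedge `H` of `Λ_i(Γ)` is a member of the hyperedge of `Λ_{i+1}(Γ)`
formed as the union of its `≡_i`-equivalence class. -/
def memberOf (G : SimpleGraph V) (i : ℕ) (H Z : Set V) : Prop :=
  H ∈ Lam G i ∧
    Z = ⋃₀ {H' | H' ∈ Lam G i ∧ ReflTransGen (hypStep G (Lam G i)) H H'}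

/-- `Γ` has hypergraph index exactly `h ∈ ℕ`. -/
def HasHypIndex (G : SimpleGraph V) (h : ℕ) : Prop :=
  (∃ L, IsWide G L) ∧ (∃ H ∈ Lam G h, Set.univ ⊆ H) ∧
    ∀ h' < h, ¬ ∃ H ∈ Lam G h', Set.univ ⊆ H

/-- The hypergraph index of `Γ` as an element of `ℕ ∪ {∞}`. -/
noncomputable def hypIndex (G : SimpleGraph V) : ℕ∞ :=
  sInf {x : ℕ∞ | ∃ m : ℕ, x = (m : ℕ∞) ∧ (∃ L, IsWide G L) ∧
          ∃ H ∈ Lam G m, Set.univ ⊆ H}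

/-- The realization `R_i(Γ)`: cosets `g W_H` for `H` a hyperedge of `Λ_i(Γ)`
whose induced subgraph is not a strip subgraph. -/
def realization (G : SimpleGraph V) (i : ℕ) : Set (Set (RACG G)) :=
  {L | ∃ (g : RACG G) (H : Set V), H ∈ Lam G i ∧ ¬ IsStrip G H ∧
        L = leftCosetOf G g H}

/-- A coset `g W_H` (with `H ∈ Λ_i`) is a member of `g' W_{H'}` (with
`H' ∈ Λ_{i+1}`). -/
def cosetMemberOf (G : SimpleGraph V) (i : ℕ) (L L' : Set (RACG G)) : Prop :=
  ∃ (g g' : RACG G) (H H' : Set V),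
    memberOf G i H H' ∧ L = leftCosetOf G g H ∧ L' = leftCosetOf G g' H' ∧ L ⊆ L'

/-- The maximal size of a clique of `Γ`. -/
noncomputable def maxCliqueSize (G : SimpleGraph V) : ℕ :=
  sSup {n : ℕ | ∃ K : Set V, G.IsClique K ∧ K.ncard = n}

/-- A combinatorial path in the Cayley graph of `W_Γ`. -/
def IsEdgePath (G : SimpleGraph V) (p : ℕ → RACG G) (n : ℕ) : Prop :=
  ∀ k < n, wdist G (p k) (p (k+1)) ≤ 1

/-- `Y` is `C`-path connected: any two points of `Y` are joined by a path in the
Cayley graph staying in the `C`-neighborhood of `Y`. -/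
def CPathConn (G : SimpleGraph V) (C : ℕ) (Y : Set (RACG G)) : Prop :=
  ∀ y₁ ∈ Y, ∀ y₂ ∈ Y, ∃ (n : ℕ) (p : ℕ → RACG G),
    p 0 = y₁ ∧ p n = y₂ ∧ IsEdgePath G p n ∧ ∀ k ≤ n, p k ∈ nbhd G C Y

/-- The coarse intersection degree of a collection `M` of subsets of `W_Γ` is at
most `d`. -/
def CoarseIntDegLE (G : SimpleGraph V) (M : Set (Set (RACG G))) (d : ℕ) : Prop :=
  ∃ (Ms : ℕ → Set (Set (RACG G))) (P : ℕ → Set (RACG G) → Set (Set (RACG G)))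
    (C : ℕ), 0 < C ∧ Ms 0 = M ∧
    (∀ i, 1 ≤ i → i ≤ d → ∀ A ∈ Ms i,
      (P i A ⊆ Ms (i-1)) ∧
      (A ⊆ ⋃ B ∈ P i A, nbhd G C B) ∧
      ((⋃ B ∈ P i A, B) ⊆ A) ∧
      (∀ A₁ ∈ P i A, ∀ A₂ ∈ P i A, ∃ (n : ℕ) (ch : ℕ → Set (RACG G)),
        ch 0 = A₁ ∧ ch n = A₂ ∧ (∀ k ≤ n, ch k ∈ P i A) ∧
        (∀ k < n, InfDiam G (nbhd G C (ch k) ∩ ch (k+1)) ∧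
          CPathConn G C (nbhd G C (ch k) ∩ ch (k+1))))) ∧
    (∃ A ∈ Ms d, ∀ B ∈ M, B ⊆ nbhd G C A)

/-- The coarse intersection degree of `M` is exactly `d`. -/
def CoarseIntDeg (G : SimpleGraph V) (M : Set (Set (RACG G))) (d : ℕ) : Prop :=
  CoarseIntDegLE G M d ∧ ∀ d' < d, ¬ CoarseIntDegLE G M d'

/-- A `(K, C)`-quasi-isometry between two right-angled Coxeter groups with
their word metrics. -/
def IsQI {V' : Type*} (G : SimpleGraph V) (G' : SimpleGraph V') (K C : ℝ)
    (f : RACG G → RACG G') : Prop :=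
  (∀ a b : RACG G,
      (1/K) * (wdist G a b : ℝ) - C ≤ (wdist G' (f a) (f b) : ℝ) ∧
      (wdist G' (f a) (f b) : ℝ) ≤ K * (wdist G a b : ℝ) + C) ∧
  (∀ y : RACG G', ∃ x : RACG G, (wdist G' y (f x) : ℝ) ≤ C)

/-- `Q` is the vertex set of an induced `4`-cycle of `Γ`. -/
def IsInducedSquare (G : SimpleGraph V) (Q : Set V) : Prop :=
  ∃ a b c d : V, Q = {a, b, c, d} ∧
    G.Adj a b ∧ G.Adj b c ∧ G.Adj c d ∧ G.Adj d a ∧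
    a ≠ c ∧ b ≠ d ∧ ¬ G.Adj a c ∧ ¬ G.Adj b d

/-- Adjacency in the square graph of `Γ`. -/
def sqAdj (G : SimpleGraph V) (Q Q' : Set V) : Prop :=
  IsInducedSquare G Q ∧ IsInducedSquare G Q' ∧ Q ≠ Q' ∧
    ∃ s t, NonAdjPair G s t ∧ s ∈ Q ∩ Q' ∧ t ∈ Q ∩ Q'

/-- `Γ` is a CFS graph. -/
def IsCFS (G : SimpleGraph V) : Prop :=
  ∃ Om K : Set V, Om ∪ K = Set.univ ∧ G.IsClique K ∧
    (∀ o ∈ Om, ∀ k ∈ K, G.Adj o k) ∧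
    ∃ Q₀, IsInducedSquare G Q₀ ∧
      ⋃₀ {Q | IsInducedSquare G Q ∧ ReflTransGen (sqAdj G) Q₀ Q} = Om

/-- Rank `n` pairs of non-adjacent vertices. -/
def IsRankPair (G : SimpleGraph V) : ℕ → V → V → Prop
  | 0, _, _ => False
  | 1, s, t => NonAdjPair G s t ∧ ¬ ∃ Q, IsInducedSquare G Q ∧ s ∈ Q ∧ t ∈ Q
  | (n+2), s, t => NonAdjPair G s t ∧
      ((∀ s₁ ∈ G.neighborSet s, ∀ s₂ ∈ G.neighborSet s,
          NonAdjPair G s₁ s₂ → IsRankPair G (n+1) s₁ s₂) ∨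
       (∀ t₁ ∈ G.neighborSet t, ∀ t₂ ∈ G.neighborSet t,
          NonAdjPair G t₁ t₂ → IsRankPair G (n+1) t₁ t₂))

/-- The hypergraph index spectrum of `W_Γ`. -/
noncomputable def hypSpectrum (G : SimpleGraph V) : Set ℕ∞ :=
  {x | ∃ T : Set V,
        (hypIndex (G.induce T) ≠ ⊤ ∧
          ∀ T' : Set V, hypIndex (G.induce T') ≠ ⊤ → T ⊆ T' → T = T') ∧
        hypIndex (G.induce T) = x}

/-!
The hyperedge of `Λ_{n-1}(B)` covering `B` survives in `Λ_{n-1}(Γ)`, and the strips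
`{b₁, b₂} ⋆ u` and `{c₁, c₂} ⋆ v` meet it in non-adjacent pairs, so one more step of the
construction produces a hyperedge of `Λ_n(Γ)` covering `Γ`.

Conversely, a hyperedge of `Λ_i(Γ)` with `i < k` through a rank `k` pair `(x, y)` lies in the
strip `{x, y} ⋆ (Link x ∩ Link y)`. The common link of a rank pair is a clique, so `{x, y}` is
the only non-adjacent pair of that strip and an `≡_i`-class cannot leave it. For a rank `n`
pair `(u, s)` with `s ∈ B` this strip misses `v`.
-/

open SimpleGraph

/-- The vertex set of the strip `{a, b} ⋆ (Link a ∩ Link b)`. -/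
def stripSet (G : SimpleGraph V) (a b : V) : Set V := {a, b} ∪ G.commonNeighbors a b

def StripBounded (G : SimpleGraph V) (E : Set (Set V)) (a b : V) : Prop :=
  ∀ H ∈ E, a ∈ H → b ∈ H → H ⊆ stripSet G a b

def LinkHasRank (G : SimpleGraph V) (k : ℕ) (x : V) : Prop :=
  ∀ s₁ ∈ G.neighborSet x, ∀ s₂ ∈ G.neighborSet x, NonAdjPair G s₁ s₂ → IsRankPair G k s₁ s₂

/-- The `≡_i`-class of `H` in `Λ_i`. -/
def hypClass (G : SimpleGraph V) (i : ℕ) (H : Set V) : Set (Set V) :=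
  {H' | H' ∈ Lam G i ∧ ReflTransGen (hypStep G (Lam G i)) H H'}

section Graph

variable {G : SimpleGraph V} {a b x y : V} {L : Set V}

theorem NonAdjPair.symm (h : NonAdjPair G x y) : NonAdjPair G y x :=
  ⟨h.1.symm, fun hyx => h.2 hyx.symm⟩

theorem stripSet_comm (a b : V) : stripSet G a b = stripSet G b a := by
  rw [stripSet, stripSet, Set.pair_comm, commonNeighbors_symm]

theorem StripBounded.symm {E : Set (Set V)} (h : StripBounded G E a b) : StripBounded G E b a :=
  fun H hH hb ha => stripSet_comm (G := G) a b ▸ h H hH ha hb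

theorem eq_and_eq_or_of_nonAdjPair {K : Set V} (hK : G.IsClique K)
    (hKab : K ⊆ G.commonNeighbors a b) (hx : x ∈ {a, b} ∪ K) (hy : y ∈ {a, b} ∪ K)
    (hxy : NonAdjPair G x y) : (x = a ∧ y = b) ∨ (x = b ∧ y = a) := by
  have hKadj {p q : V} (hp : p ∈ K) (hq : q ∈ {a, b} ∪ K) (hpq : p ≠ q) : G.Adj p q := by
    rcases hq with (rfl | rfl) | hq
    exacts [(G.mem_commonNeighbors.1 (hKab hp)).1.symm, (G.mem_commonNeighbors.1 (hKab hp)).2.symm,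
      hK hp hq hpq]
  have hx' : x ∈ ({a, b} : Set V) := hx.resolve_right fun hxK => hxy.2 (hKadj hxK hy hxy.1)
  have hy' : y ∈ ({a, b} : Set V) :=
    hy.resolve_right fun hyK => hxy.2 (hKadj hyK hx hxy.1.symm).symm
  rcases hx' with rfl | rfl <;> rcases hy' with rfl | rfl
  exacts [absurd rfl hxy.1, .inl ⟨rfl, rfl⟩, .inr ⟨rfl, rfl⟩, absurd rfl hxy.1]

theorem notMem_stripSet {w : V} (hx : w ≠ x) (hy : w ≠ y) (hxw : ¬ G.Adj x w) :
    w ∉ stripSet G x y := by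
  rintro ((rfl | rfl) | hw)
  exacts [hx rfl, hy rfl, hxw (G.mem_commonNeighbors.1 hw).1]

theorem subset_stripSet_of_nonAdjPair {H : Set V} (hC : G.IsClique (G.commonNeighbors a b))
    (hH : H ⊆ stripSet G a b) (hx : x ∈ H) (hy : y ∈ H) (hxy : NonAdjPair G x y) :
    H ⊆ stripSet G x y := by
  rcases eq_and_eq_or_of_nonAdjPair hC subset_rfl (hH hx) (hH hy) hxy with
    ⟨rfl, rfl⟩ | ⟨rfl, rfl⟩
  · exact hH
  · rwa [stripSet_comm]

theorem IsRankPair.isClique_commonNeighbors :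
    ∀ {k : ℕ} {x y : V}, IsRankPair G k x y → G.IsClique (G.commonNeighbors x y)
  | 1, x, y, h => by
    intro z hz z' hz' hne
    by_contra hzz'
    rw [mem_commonNeighbors] at hz hz'
    exact h.2 ⟨{x, z, y, z'}, ⟨x, z, y, z', rfl, hz.1, hz.2.symm, hz'.2, hz'.1.symm, h.1.1, hne,
      h.1.2, hzz'⟩, by simp, by simp⟩
  | _ + 2, x, y, h => by
    intro z hz z' hz' hne
    by_contra hzz'
    rw [mem_commonNeighbors] at hz hz'
    have hx : x ∈ G.commonNeighbors z z' := G.mem_commonNeighbors.2 ⟨hz.1.symm, hz'.1.symm⟩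
    have hy : y ∈ G.commonNeighbors z z' := G.mem_commonNeighbors.2 ⟨hz.2.symm, hz'.2.symm⟩
    have hzz'_rank := h.2.elim (fun hl => hl z hz.1 z' hz'.1 ⟨hne, hzz'⟩)
      (fun hl => hl z hz.2 z' hz'.2 ⟨hne, hzz'⟩)
    exact h.1.2 (hzz'_rank.isClique_commonNeighbors hx hy h.1.1)

theorem not_isWidePre_of_isClique_commonNeighbors (hxy : NonAdjPair G x y)
    (hC : G.IsClique (G.commonNeighbors x y)) (hx : x ∈ L) (hy : y ∈ L) : ¬ IsWidePre G L := by
  rintro ⟨A, C, ⟨rfl, hAC⟩, ⟨a, ha, a', ha', haa'⟩, ⟨c, hc, c', hc', hcc'⟩⟩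
  rcases hx with hx | hx <;> rcases hy with hy | hy
  · exact hcc'.2 (hC (G.mem_commonNeighbors.2 ⟨hAC x hx c hc, hAC y hy c hc⟩)
      (G.mem_commonNeighbors.2 ⟨hAC x hx c' hc', hAC y hy c' hc'⟩) hcc'.1)
  · exact hxy.2 (hAC x hx y hy)
  · exact hxy.2 (hAC y hy x hx).symm
  · exact haa'.2 (hC (G.mem_commonNeighbors.2 ⟨(hAC a ha x hx).symm, (hAC a ha y hy).symm⟩)
      (G.mem_commonNeighbors.2 ⟨(hAC a' ha' x hx).symm, (hAC a' ha' y hy).symm⟩) haa'.1)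

theorem IsWidePre.exists_nonAdjPair_adj (hL : IsWidePre G L) (hx : x ∈ L) :
    ∃ c ∈ L, ∃ c' ∈ L, NonAdjPair G c c' ∧ G.Adj x c ∧ G.Adj x c' := by
  obtain ⟨A, C, ⟨rfl, hAC⟩, ⟨a, ha, a', ha', haa'⟩, ⟨c, hc, c', hc', hcc'⟩⟩ := hL
  rcases hx with hx | hx
  · exact ⟨c, .inr hc, c', .inr hc', hcc', hAC x hx c hc, hAC x hx c' hc'⟩
  · exact ⟨a, .inl ha, a', .inl ha', haa', (hAC a ha x hx).symm, (hAC a' ha' x hx).symm⟩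

theorem IsWidePre.exists_mem_ne_ne (hL : IsWidePre G L) (p q : V) :
    ∃ s ∈ L, s ≠ p ∧ s ≠ q := by
  obtain ⟨A, C, ⟨rfl, hAC⟩, ⟨a, ha, a', ha', haa'⟩, ⟨c, hc, -⟩⟩ := hL
  have hac : a ≠ c := (hAC a ha c hc).ne
  have ha'c : a' ≠ c := (hAC a' ha' c hc).ne
  have haa' := haa'.1
  by_contra! h
  have hpq (s : V) (hs : s ∈ A ∪ C) : s = p ∨ s = q := or_iff_not_imp_left.2 (h s hs)
  have := hpq a (.inl ha)
  have := hpq a' (.inl ha')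
  have := hpq c (.inr hc)
  grind

theorem LinkHasRank.not_isWidePre {k : ℕ} (hx : LinkHasRank G k x) (hL : IsWidePre G L)
    (hxL : x ∈ L) : False := by
  obtain ⟨c, hc, c', hc', hcc', hxc, hxc'⟩ := hL.exists_nonAdjPair_adj hxL
  exact not_isWidePre_of_isClique_commonNeighbors hcc'
    (hx c hxc c' hxc' hcc').isClique_commonNeighbors hc hc' hL

theorem IsStripPre.hasNonAdjPair (hL : IsStripPre G L) : HasNonAdjPair G L := by
  obtain ⟨A, K, ⟨s, t, hst, rfl⟩, -, -, rfl, -⟩ := hL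
  exact ⟨s, .inl (.inl rfl), t, .inl (.inr rfl), hst⟩

theorem IsStripPre.subset_stripSet (hL : IsStripPre G L) (hx : x ∈ L) (hy : y ∈ L)
    (hxy : NonAdjPair G x y) : L ⊆ stripSet G x y := by
  obtain ⟨A, K, ⟨s, t, -, rfl⟩, -, hK, rfl, hAK⟩ := hL
  have hKst : K ⊆ G.commonNeighbors s t := fun k hk =>
    G.mem_commonNeighbors.2 ⟨hAK s (.inl rfl) k hk, hAK t (.inr rfl) k hk⟩
  have hsub : {s, t} ∪ K ⊆ stripSet G s t := Set.union_subset_union_right _ hKst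
  rcases eq_and_eq_or_of_nonAdjPair hK hKst hx hy hxy with ⟨rfl, rfl⟩ | ⟨rfl, rfl⟩
  · exact hsub
  · rwa [stripSet_comm]

theorem isStripPre_of_subset_neighborSet {b₁ b₂ u : V} (hb : NonAdjPair G b₁ b₂)
    (hu : {b₁, b₂} ⊆ G.neighborSet u) : IsStripPre G ({b₁, b₂} ∪ {u}) := by
  refine ⟨{b₁, b₂}, {u}, ⟨b₁, b₂, hb, rfl⟩, Set.singleton_nonempty u,
    Set.pairwise_singleton u G.Adj, rfl, ?_⟩
  rintro a (rfl | rfl) _ rfl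
  exacts [(hu (.inl rfl)).symm, (hu (.inr rfl)).symm]

variable [Finite V]

theorem IsWidePre.exists_isWide_superset (hL : IsWidePre G L) : ∃ M, IsWide G M ∧ L ⊆ M := by
  obtain ⟨M, hLM, hM, hmax⟩ := Finite.exists_le_maximal hL
  exact ⟨M, ⟨hM, fun L' hL' hML' => hML'.antisymm (hmax hL' hML')⟩, hLM⟩

theorem IsStripPre.exists_lam_zero_superset (hL : IsStripPre G L) : ∃ M ∈ Lam G 0, L ⊆ M := by
  by_cases hW : ∃ W, IsWidePre G W ∧ L ⊆ W
  · obtain ⟨W, hW, hLW⟩ := hW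
    obtain ⟨M, hM, hWM⟩ := hW.exists_isWide_superset
    exact ⟨M, .inl hM, hLW.trans hWM⟩
  · obtain ⟨M, hLM, hM, hmax⟩ := Finite.exists_le_maximal hL
    refine ⟨M, .inr ⟨hM, fun L' hL' hML' => absurd ⟨L', hL'.1, hLM.trans hML'⟩ hW,
      fun L' hL' hML' => hML'.antisymm (hmax hL' hML')⟩, hLM⟩

end Graph

section Hypergraph

variable {G : SimpleGraph V} {i : ℕ} {H : Set V}

instance hypStep.instSymm (E : Set (Set V)) : Std.Symm (hypStep G E) :=
  ⟨fun _ _ ⟨h₁, h₂, s, t, hst, hs, ht⟩ => ⟨h₂, h₁, s, t, hst, ⟨hs.2, hs.1⟩, ⟨ht.2, ht.1⟩⟩⟩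

theorem lam_zero_cases (hH : H ∈ Lam G 0) : IsWidePre G H ∨ IsStripPre G H :=
  hH.imp (·.1) (·.1)

theorem sUnion_hypClass_mem_lam_succ (hH : H ∈ Lam G i) : ⋃₀ hypClass G i H ∈ Lam G (i + 1) :=
  ⟨H, hH, rfl⟩

theorem self_mem_hypClass (hH : H ∈ Lam G i) : H ∈ hypClass G i H := ⟨hH, .refl⟩

theorem exists_lam_superset_of_le {j : ℕ} (hij : i ≤ j) (hH : H ∈ Lam G i) :
    ∃ Z ∈ Lam G j, H ⊆ Z := by
  induction j, hij using Nat.le_induction with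
  | base => exact ⟨H, hH, subset_rfl⟩
  | succ j _ ih =>
    obtain ⟨Z, hZ, hHZ⟩ := ih
    exact ⟨_, sUnion_hypClass_mem_lam_succ hZ,
      hHZ.trans (Set.subset_sUnion_of_mem (self_mem_hypClass hZ))⟩

theorem mem_sUnion_hypClass_of_subset_neighborSet [Finite V] {b₁ b₂ u : V} (hH : H ∈ Lam G i)
    (hb : NonAdjPair G b₁ b₂) (hb₁ : b₁ ∈ H) (hb₂ : b₂ ∈ H) (hu : {b₁, b₂} ⊆ G.neighborSet u) :
    u ∈ ⋃₀ hypClass G i H := by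
  obtain ⟨E₀, hE₀, hsub₀⟩ := (isStripPre_of_subset_neighborSet hb hu).exists_lam_zero_superset
  obtain ⟨E, hE, hsub⟩ := exists_lam_superset_of_le (Nat.zero_le i) hE₀
  have hbE : ∀ w ∈ ({b₁, b₂} : Set V), w ∈ E := fun w hw => hsub (hsub₀ (.inl hw))
  have hEH : E ∈ hypClass G i H := ⟨hE, .single ⟨hH, hE, b₁, b₂, hb,
    ⟨hb₁, hbE b₁ (.inl rfl)⟩, ⟨hb₂, hbE b₂ (.inr rfl)⟩⟩⟩
  exact Set.subset_sUnion_of_mem hEH (hsub (hsub₀ (.inr rfl)))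

section Embedding

variable {W : Type*} {G' : SimpleGraph W} (f : G' ↪g G)

theorem NonAdjPair.map {x y : W} (h : NonAdjPair G' x y) : NonAdjPair G (f x) (f y) :=
  ⟨f.injective.ne h.1, fun hadj => h.2 (f.map_adj_iff.1 hadj)⟩

theorem IsWidePre.image {L : Set W} (h : IsWidePre G' L) : IsWidePre G (f '' L) := by
  obtain ⟨A, C, ⟨rfl, hAC⟩, ⟨a, ha, a', ha', haa'⟩, ⟨c, hc, c', hc', hcc'⟩⟩ := h
  refine ⟨f '' A, f '' C, ⟨(Set.image_union f A C).symm, ?_⟩,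
    ⟨f a, ⟨a, ha, rfl⟩, f a', ⟨a', ha', rfl⟩, haa'.map f⟩,
    ⟨f c, ⟨c, hc, rfl⟩, f c', ⟨c', hc', rfl⟩, hcc'.map f⟩⟩
  rintro _ ⟨a₀, ha₀, rfl⟩ _ ⟨c₀, hc₀, rfl⟩
  exact f.map_adj_iff.2 (hAC a₀ ha₀ c₀ hc₀)

theorem IsStripPre.image {L : Set W} (h : IsStripPre G' L) : IsStripPre G (f '' L) := by
  obtain ⟨A, K, ⟨s, t, hst, rfl⟩, hK, hKcl, rfl, hAK⟩ := h
  refine ⟨f '' {s, t}, f '' K, ⟨f s, f t, hst.map f, Set.image_pair f s t⟩, hK.image f, ?_,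
    (Set.image_union f _ K).symm, ?_⟩
  · rintro _ ⟨k₀, hk₀, rfl⟩ _ ⟨k₁, hk₁, rfl⟩ hne
    exact f.map_adj_iff.2 (hKcl hk₀ hk₁ (ne_of_apply_ne f hne))
  · rintro _ ⟨a₀, ha₀, rfl⟩ _ ⟨k₀, hk₀, rfl⟩
    exact f.map_adj_iff.2 (hAK a₀ ha₀ k₀ hk₀)

theorem exists_lam_superset_image [Finite V] :
    ∀ (i : ℕ) {H : Set W}, H ∈ Lam G' i → ∃ Z ∈ Lam G i, f '' H ⊆ Z
  | 0, H, hH => (lam_zero_cases hH).elim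
      (fun hw => (hw.image f).exists_isWide_superset.imp fun _ h => ⟨.inl h.1, h.2⟩)
      (fun hs => (hs.image f).exists_lam_zero_superset)
  | i + 1, _, ⟨H₀, hH₀, rfl⟩ => by
    obtain ⟨Z₀, hZ₀, hH₀Z₀⟩ := exists_lam_superset_image i hH₀
    have hclass : ∀ H', ReflTransGen (hypStep G' (Lam G' i)) H₀ H' →
        ∃ Z' ∈ hypClass G i Z₀, f '' H' ⊆ Z' := by
      intro H' hr
      induction hr with
      | refl => exact ⟨Z₀, self_mem_hypClass hZ₀, hH₀Z₀⟩
      | tail _ hstep ih =>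
        obtain ⟨Z₁, ⟨hZ₁, hr₁⟩, hsub₁⟩ := ih
        obtain ⟨-, hH₂, s, t, hst, hs, ht⟩ := hstep
        obtain ⟨Z₂, hZ₂, hsub₂⟩ := exists_lam_superset_image i hH₂
        refine ⟨Z₂, ⟨hZ₂, hr₁.tail ⟨hZ₁, hZ₂, f s, f t, hst.map f, ?_, ?_⟩⟩, hsub₂⟩
        · exact ⟨hsub₁ ⟨s, hs.1, rfl⟩, hsub₂ ⟨s, hs.2, rfl⟩⟩
        · exact ⟨hsub₁ ⟨t, ht.1, rfl⟩, hsub₂ ⟨t, ht.2, rfl⟩⟩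
    refine ⟨_, sUnion_hypClass_mem_lam_succ hZ₀, ?_⟩
    rintro _ ⟨a, ⟨H', ⟨-, hr⟩, ha⟩, rfl⟩
    obtain ⟨Z', hZ', hsub⟩ := hclass H' hr
    exact Set.subset_sUnion_of_mem hZ' (hsub ⟨a, ha, rfl⟩)

end Embedding

theorem HasHypIndex.exists_isWidePre_and_lam_superset [Finite V] {B : Set V} {j : ℕ}
    (h : HasHypIndex (G.induce B) j) : (∃ L ⊆ B, IsWidePre G L) ∧ ∃ Z ∈ Lam G j, B ⊆ Z := by
  obtain ⟨⟨L, hL⟩, ⟨H, hH, hHuniv⟩, -⟩ := h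
  let f := Embedding.induce (G := G) B
  obtain ⟨Z, hZ, hHZ⟩ := exists_lam_superset_image f j hH
  refine ⟨⟨f '' L, ?_, hL.1.image f⟩, Z, hZ, fun w hw => hHZ ⟨⟨w, hw⟩, hHuniv trivial, rfl⟩⟩
  rintro _ ⟨w, -, rfl⟩
  exact w.2

end Hypergraph

section Rank

variable {G : SimpleGraph V} {i : ℕ} {a b x y : V} {H M : Set V}

theorem StripBounded.mem_of_reflTransGen (hC : G.IsClique (G.commonNeighbors a b))
    (hB : StripBounded G (Lam G i) a b) {H₁ H₂ : Set V}
    (hr : ReflTransGen (hypStep G (Lam G i)) H₁ H₂) (ha : a ∈ H₁) (hb : b ∈ H₁) :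
    a ∈ H₂ ∧ b ∈ H₂ := by
  induction hr with
  | refl => exact ⟨ha, hb⟩
  | tail _ hstep ih =>
    obtain ⟨hH, -, s, t, hst, hs, ht⟩ := hstep
    have hsub := hB _ hH ih.1 ih.2
    rcases eq_and_eq_or_of_nonAdjPair hC subset_rfl (hsub hs.1) (hsub ht.1) hst with
      ⟨rfl, rfl⟩ | ⟨rfl, rfl⟩
    exacts [⟨hs.2, ht.2⟩, ⟨ht.2, hs.2⟩]

theorem StripBounded.sUnion_hypClass_subset (hC : G.IsClique (G.commonNeighbors a b))
    (hB : StripBounded G (Lam G i) a b) (hM : M ∈ hypClass G i H) (ha : a ∈ M) (hb : b ∈ M) :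
    ⋃₀ hypClass G i H ⊆ stripSet G a b := by
  rintro w ⟨H', ⟨hH', hr'⟩, hw⟩
  obtain ⟨ha', hb'⟩ := hB.mem_of_reflTransGen hC ((Std.Symm.symm _ _ hM.2).trans hr') ha hb
  exact hB H' hH' ha' hb' hw

section LinkHasRank

variable {m : ℕ}

theorem LinkHasRank.isClique_commonNeighbors (hx : LinkHasRank G (m + 1) x) (hab : NonAdjPair G a b)
    (hxab : x ∈ stripSet G a b) : G.IsClique (G.commonNeighbors a b) := by
  rcases hxab with (rfl | rfl) | hxab
  · exact IsRankPair.isClique_commonNeighbors (k := m + 2) ⟨hab, .inl hx⟩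
  · exact IsRankPair.isClique_commonNeighbors (k := m + 2) ⟨hab, .inr hx⟩
  · rw [mem_commonNeighbors] at hxab
    exact (hx a hxab.1.symm b hxab.2.symm hab).isClique_commonNeighbors

theorem LinkHasRank.stripBounded_of_mem_stripSet (hx : LinkHasRank G (m + 1) x)
    (IH : ∀ p q, IsRankPair G (m + 1) p q → ∀ i ≤ m, StripBounded G (Lam G i) p q) (hi : i ≤ m)
    (hS : ∀ H ∈ Lam G i, x ∈ H → ∃ c ∈ H, ∃ d ∈ H, NonAdjPair G c d ∧ H ⊆ stripSet G c d)
    (hab : NonAdjPair G a b) (hxab : x ∈ stripSet G a b) : StripBounded G (Lam G i) a b := by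
  intro H hH ha hb
  rcases hxab with hxab | hxab
  · have hxH : x ∈ H := by rcases hxab with rfl | rfl <;> assumption
    obtain ⟨c, -, d, -, hcd, hsub⟩ := hS H hH hxH
    exact subset_stripSet_of_nonAdjPair (hx.isClique_commonNeighbors hcd (hsub hxH)) hsub ha hb hab
  · rw [mem_commonNeighbors] at hxab
    exact IH a b (hx a hxab.1.symm b hxab.2.symm hab) i hi H hH ha hb

/-- Induction on `i`: the pair `(c, d)` of a class member through `x` has `x` in its strip, so
the link condition makes it `StripBounded`, and the whole class stays in that strip. -/
theorem LinkHasRank.exists_subset_stripSet (hx : LinkHasRank G (m + 1) x)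
    (IH : ∀ p q, IsRankPair G (m + 1) p q → ∀ i ≤ m, StripBounded G (Lam G i) p q) :
    ∀ i ≤ m + 1, ∀ H ∈ Lam G i, x ∈ H →
      ∃ c ∈ H, ∃ d ∈ H, NonAdjPair G c d ∧ H ⊆ stripSet G c d := by
  intro i
  induction i with
  | zero =>
    intro _ H hH hxH
    rcases lam_zero_cases hH with hw | hs
    · exact (hx.not_isWidePre hw hxH).elim
    · obtain ⟨c, hc, d, hd, hcd⟩ := hs.hasNonAdjPair
      exact ⟨c, hc, d, hd, hcd, hs.subset_stripSet hc hd hcd⟩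
  | succ i ih =>
    rintro hi _ ⟨H₀, -, rfl⟩ ⟨M, hM, hxM⟩
    obtain ⟨c, hc, d, hd, hcd, hsub⟩ := ih (by omega) M hM.1 hxM
    have hC := hx.isClique_commonNeighbors hcd (hsub hxM)
    have hB := hx.stripBounded_of_mem_stripSet IH (by omega) (ih (by omega)) hcd (hsub hxM)
    exact ⟨c, Set.subset_sUnion_of_mem hM hc, d, Set.subset_sUnion_of_mem hM hd, hcd,
      hB.sUnion_hypClass_subset hC hM hc hd⟩

theorem LinkHasRank.stripBounded (hx : LinkHasRank G (m + 1) x)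
    (IH : ∀ p q, IsRankPair G (m + 1) p q → ∀ i ≤ m, StripBounded G (Lam G i) p q)
    (hxy : NonAdjPair G x y) (hi : i ≤ m + 1) :
    StripBounded G (Lam G i) x y := by
  intro H hH hxH hyH
  obtain ⟨c, -, d, -, hcd, hsub⟩ := hx.exists_subset_stripSet IH i hi H hH hxH
  exact subset_stripSet_of_nonAdjPair (hx.isClique_commonNeighbors hcd (hsub hxH)) hsub hxH hyH
    hxy

end LinkHasRank

theorem IsRankPair.stripBounded :
    ∀ {k : ℕ} {x y : V}, IsRankPair G k x y → ∀ i < k, StripBounded G (Lam G i) x y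
  | 1, _, _, h => fun i hi H hH hx hy => by
    obtain rfl : i = 0 := by omega
    rcases lam_zero_cases hH with hw | hs
    · exact absurd hw (not_isWidePre_of_isClique_commonNeighbors h.1
        h.isClique_commonNeighbors hx hy)
    · exact hs.subset_stripSet hx hy h.1
  | m + 2, _, _, h => fun i hi => by
    have IH (p q : V) (hpq : IsRankPair G (m + 1) p q) (j : ℕ) (hj : j ≤ m) :=
      hpq.stripBounded j (by omega)
    rcases h.2 with hx | hy
    · exact LinkHasRank.stripBounded hx IH h.1 (by omega)
    · exact (LinkHasRank.stripBounded hy IH h.1.symm (by omega)).symm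

theorem IsRankPair.not_univ_subset {k : ℕ} {w : V} (h : IsRankPair G k x y)
    (hw : w ∉ stripSet G x y) (hi : i < k) (hH : H ∈ Lam G i) : ¬ Set.univ ⊆ H :=
  fun hH' => hw (h.stripBounded i hi H hH (hH' trivial) (hH' trivial) (hH' trivial))

end Rank

theorem counterexample_graph_hypergraph_index_general [Finite V] (G : SimpleGraph V)
    (n : ℕ) (hn : 1 < n) (B : Set V) (u v : V) (huv : u ≠ v)
    (hB : Bᶜ = {u, v})
    (hBidx : HasHypIndex (G.induce B) (n - 1))
    (hu : ∃ b₁ b₂, b₁ ∈ B ∧ b₂ ∈ B ∧ NonAdjPair G b₁ b₂ ∧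
      G.neighborSet u = {b₁, b₂})
    (hv : ∃ b₁ b₂, b₁ ∈ B ∧ b₂ ∈ B ∧ NonAdjPair G b₁ b₂ ∧
      G.neighborSet v = {b₁, b₂})
    (hru : ∀ s, s ∉ insert u (G.neighborSet u) → IsRankPair G n u s) :
    HasHypIndex G n := by
  obtain ⟨b₁, b₂, hb₁, hb₂, hb, hNu⟩ := hu
  obtain ⟨c₁, c₂, hc₁, hc₂, hc, hNv⟩ := hv
  obtain ⟨⟨L, hLB, hL⟩, Z, hZ, hBZ⟩ := hBidx.exists_isWidePre_and_lam_superset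
  have huB : u ∈ Bᶜ := hB ▸ Set.mem_insert u {v}
  have hvB : v ∈ Bᶜ := hB ▸ Set.mem_insert_of_mem u rfl
  refine ⟨hL.exists_isWide_superset.imp fun _ h => h.1, ⟨⋃₀ hypClass G (n - 1) Z, ?_, ?_⟩, ?_⟩
  · simpa [Nat.sub_add_cancel hn.le] using sUnion_hypClass_mem_lam_succ hZ
  · intro w _
    by_cases hw : w ∈ B
    · exact Set.subset_sUnion_of_mem (self_mem_hypClass hZ) (hBZ hw)
    rcases (hB ▸ hw : w ∈ ({u, v} : Set V)) with rfl | rfl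
    · exact mem_sUnion_hypClass_of_subset_neighborSet hZ hb (hBZ hb₁) (hBZ hb₂) hNu.ge
    · exact mem_sUnion_hypClass_of_subset_neighborSet hZ hc (hBZ hc₁) (hBZ hc₂) hNv.ge
  · rintro h' hh' ⟨H, hH, hHuniv⟩
    obtain ⟨s, hsL, hsb₁, hsb₂⟩ := hL.exists_mem_ne_ne b₁ b₂
    have hsu : s ∉ insert u (G.neighborSet u) := by
      rw [hNu]
      rintro (rfl | rfl | rfl)
      exacts [huB (hLB hsL), hsb₁ rfl, hsb₂ rfl]
    have hvs : v ∉ stripSet G u s := notMem_stripSet huv.symm (fun h => hvB (h ▸ hLB hsL))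
      fun h => hvB ((hNu ▸ Set.pair_subset hb₁ hb₂ : G.neighborSet u ⊆ B) h)
    exact (hru s hsu).not_univ_subset hvs hh' hH hHuniv

/-- under the hypotheses of Theorem 7.4 (two strip vertices `u, v`
attached to a graph `B` of hypergraph index `n - 1`, with the rank `n` pair
conditions), `Γ` has hypergraph index exactly `n`. -/
theorem counterexample_graph_hypergraph_index [Finite V] (G : SimpleGraph V)
    (n : ℕ) (hn : 1 < n) (B : Set V) (u v : V) (huv : u ≠ v)
    (hB : Bᶜ = {u, v})
    (hBidx : HasHypIndex (G.induce B) (n - 1))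
    (hu : ∃ b₁ b₂, b₁ ∈ B ∧ b₂ ∈ B ∧ NonAdjPair G b₁ b₂ ∧
      G.neighborSet u = {b₁, b₂})
    (hv : ∃ b₁ b₂, b₁ ∈ B ∧ b₂ ∈ B ∧ NonAdjPair G b₁ b₂ ∧
      G.neighborSet v = {b₁, b₂})
    (hru : ∀ s, s ∉ insert u (G.neighborSet u) → IsRankPair G n u s)
    (hrv : ∀ s, s ∉ insert v (G.neighborSet v) → IsRankPair G n v s) :
    HasHypIndex G n :=
  counterexample_graph_hypergraph_index_general G n hn B u v huv hB hBidx hu hv hru
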